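/- arXiv:2109.06008 — 4 statements merged into one kernel-verified Lean document; each statement's English description precedes it below -/
import Mathlib

section
/- Let N₀ ≥ 4 be an integer, set δ := 2/(N₀−1) and δ̄ := (N₀−3)/(N₀−1)². Let (η_k)_{k≥1} be a sequence of reals such that η₁ ≥ N₀−1 and, for every k ≥ 1, η_{k+1} = η_k + (1/(k+1))·χ_k·(G_{k+1} − η_k), where χ_k = 1 if η_k > δ and χ_k = 0 otherwise, and where (G_{k+1}) are reals with |G_{k+1}| ≤ 1 for all k. Then η_k ≥ δ̄ for every k ≥ 1. -/
/-!
While the recursion is active, `(k + 1) η_{k+1} = k η_k + G_{k+1}`, so the partial sums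
`k η_k` lose at most `1` per step; hence `k η_k ≥ N₀ - k`, and `k η_k > k δ` as long as
`η_k > δ`. At a step `k` where the recursion is still active this gives
`(k + 1) η_{k+1} ≥ max (N₀ - k) (k δ) - 1`, whose ratio to `k + 1` is smallest at
`k = N₀ - 2`, where it equals `δ̄`. Once `η_k ≤ δ`, `η` is constant.
-/

lemma succ_mul_eq_of_eq_add_div {k : ℕ} {x y g : ℝ}
    (h : y = x + 1 / ((k : ℝ) + 1) * (g - x)) :
    ((k : ℝ) + 1) * y = k * x + g := by
  rw [h]
  field_simp
  ring

section FrozenRecursion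

variable {δ L c : ℝ} {η G : ℕ → ℝ}

theorem frozen_recursion_invariant (hc : 0 ≤ c) (hL : -1 ≤ L)
    (hLc : ∀ k : ℕ, ((k : ℝ) + 1) * L ≤ max (c - k) (k * δ) - 1)
    (hη1 : c - 1 ≤ η 1) (hG : ∀ k : ℕ, -1 ≤ G (k + 1))
    (hrec : ∀ k : ℕ, 1 ≤ k →
      η (k + 1) = η k + 1 / ((k : ℝ) + 1) * (if δ < η k then (1 : ℝ) else 0) * (G (k + 1) - η k))
    {k : ℕ} (hk : 1 ≤ k) : L ≤ η k ∧ c - k ≤ k * η k := by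
  induction k, hk using Nat.le_induction with
  | base =>
    have hL1 : L ≤ max c 0 - 1 := by simpa using hLc 0
    rw [max_eq_left hc] at hL1
    exact ⟨hL1.trans hη1, by simpa using hη1⟩
  | succ k hk ih =>
    obtain ⟨hLη, hsum⟩ := ih
    have hk0 : (0 : ℝ) ≤ k := k.cast_nonneg
    push_cast
    by_cases hactive : δ < η k
    · have hstep : ((k : ℝ) + 1) * η (k + 1) = k * η k + G (k + 1) :=
        succ_mul_eq_of_eq_add_div (by simpa [hactive] using hrec k hk)
      have hδ : k * δ ≤ k * η k := mul_le_mul_of_nonneg_left hactive.le hk0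
      have hmax : max (c - k) (k * δ) - 1 ≤ ((k : ℝ) + 1) * η (k + 1) := by
        rw [hstep]
        linarith [max_le hsum hδ, hG k]
      refine ⟨le_of_mul_le_mul_left ((hLc k).trans hmax) (by positivity), ?_⟩
      linarith [le_max_left (c - k) (k * δ)]
    · have hfrozen : η (k + 1) = η k := by simpa [hactive] using hrec k hk
      rw [hfrozen]
      exact ⟨hLη, by linarith⟩

end FrozenRecursion

lemma succ_mul_le_max_sub_one {n k : ℝ} (hn : 3 ≤ n) :
    (k + 1) * ((n - 3) / (n - 1) ^ 2) ≤ max (n - k) (k * (2 / (n - 1))) - 1 := by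
  have hn1 : 0 < n - 1 := by linarith
  rw [mul_div_assoc', div_le_iff₀ (by positivity)]
  rcases le_total k (n - 2) with hkn | hkn
  · calc (k + 1) * (n - 3) ≤ (n - 1) * (n - 1) := by nlinarith
      _ ≤ (n - k - 1) * (n - 1) ^ 2 := by nlinarith
      _ ≤ (max (n - k) (k * (2 / (n - 1))) - 1) * (n - 1) ^ 2 := by
          gcongr; linarith [le_max_left (n - k) (k * (2 / (n - 1)))]
  · calc (k + 1) * (n - 3) ≤ (k * (2 / (n - 1)) - 1) * (n - 1) ^ 2 := by
          have : (k * (2 / (n - 1)) - 1) * (n - 1) ^ 2 - (k + 1) * (n - 3)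
              = (k - (n - 2)) * (n + 1) := by field_simp; ring
          nlinarith
      _ ≤ (max (n - k) (k * (2 / (n - 1))) - 1) * (n - 1) ^ 2 := by
          gcongr; exact le_max_right _ _

/-- Lower bound on the frozen stochastic-approximation recursion for the
normalized population size `η_k`: with `δ = 2/(N₀-1)` and `δ̄ = (N₀-3)/(N₀-1)²`,
if `η₁ ≥ N₀ - 1` and `η_{k+1} = η_k + (1/(k+1)) · 1_{η_k > δ} · (G_{k+1} - η_k)` with
`|G_{k+1}| ≤ 1`, then `η_k ≥ δ̄` for all `k ≥ 1`. -/
theorem stmt_0 (N₀ : ℕ) (hN : 4 ≤ N₀) (η G : ℕ → ℝ)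
    (hη1 : (N₀ : ℝ) - 1 ≤ η 1)
    (hG : ∀ k : ℕ, |G (k + 1)| ≤ 1)
    (hrec : ∀ k : ℕ, 1 ≤ k →
      η (k + 1) = η k + (1 / ((k : ℝ) + 1)) *
        (if 2 / ((N₀ : ℝ) - 1) < η k then (1 : ℝ) else 0) * (G (k + 1) - η k)) :
    ∀ k : ℕ, 1 ≤ k → ((N₀ : ℝ) - 3) / ((N₀ : ℝ) - 1) ^ 2 ≤ η k := by
  have hN3 : (3 : ℝ) ≤ N₀ := by exact_mod_cast (by omega : 3 ≤ N₀)
  intro k hk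
  have hL0 : (0 : ℝ) ≤ ((N₀ : ℝ) - 3) / ((N₀ : ℝ) - 1) ^ 2 :=
    div_nonneg (by linarith) (by positivity)
  exact (frozen_recursion_invariant (by linarith) (by linarith)
    (fun _ => succ_mul_le_max_sub_one hN3) hη1 (fun j => (abs_le.mp (hG j)).1) hrec hk).1
end

section
/- Fix reals λ, r, b, ν > 0, d ≥ 0 with b > d, δ > 0, and β̂ ≥ 0, and let q(θ,ψ) := min{β̂ψ, 1} (follow-the-crowd response). Set ρ := λ/(r+b) and μ := b/ν, and assume ρ > 1 and β̂ < μρ. Let θ̂ := 1 − 1/ρ, ψ̂ := 0, and η̂ := (b−d)/ϱ(θ̂,ψ̂). If η̂ > δ, then the point P := (θ̂, ψ̂, η̂) is a Lyapunov-stable equilibrium of g. -/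
/-!
Near `P = (θ̂, 0, η̂)` we use the weighted squared distance
`V = (θ - θ̂)² + K ψ² + ε (η - η̂)²`. Since `(1 - θ̂) λ = r + b`, the θ-component of `g` is
`-s λ ((θ - θ̂) + ψ)` with `s = θ / (η ϱ)` pinched between positive constants `s₁ ≤ s ≤ s₂`
near `P`, so it contributes at most `-λ s₁ (θ - θ̂)² + λ s₂ ψ²`. Near `ψ = 0` the crowd
response is linear, `q = β̂ ψ`, and `β̂ < μ ρ` says exactly that `β̂ ν (1 - θ̂) < b`; hence the
ψ-component is `ψ` times a uniformly negative factor, and a large `K` absorbs the `ψ²` error.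
The η-component is `η̂ - η` plus a term Lipschitz in `(θ - θ̂, ψ)`, whose square is absorbed by
taking `ε` small.
-/

/-- `ϱ(θ,ψ) = b + d + λθφ + νφ + rθ` with `φ = 1 − θ − ψ` (case `d_e = 0`). -/
noncomputable def varrho (lam r b ν d θ ψ : ℝ) : ℝ :=
  b + d + lam * θ * (1 - θ - ψ) + ν * (1 - θ - ψ) + r * θ

/-- The vector field `g = (g^θ, g^ψ, g^η)` of the limit ODE for the epidemic model with
vaccination-response function `q`, on coordinates `(θ, ψ, η)`. -/
noncomputable def epiVF (lam r b ν d : ℝ) (q : ℝ → ℝ → ℝ) (x : ℝ × ℝ × ℝ) : ℝ × ℝ × ℝ :=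
  (x.1 / (x.2.2 * varrho lam r b ν d x.1 x.2.1) * ((1 - x.1 - x.2.1) * lam - r - b),
   1 / (x.2.2 * varrho lam r b ν d x.1 x.2.1) *
     (q x.1 x.2.1 * (1 - x.1 - x.2.1) * ν - b * x.2.1),
   (b - d) / varrho lam r b ν d x.1 x.2.1 - x.2.2)

/-- The domain `D = {(θ,ψ,η) : θ ≥ 0, ψ ≥ 0, θ+ψ ≤ 1, η > δ}`. -/
def domD (δ : ℝ) : Set (ℝ × ℝ × ℝ) :=
  {x | 0 ≤ x.1 ∧ 0 ≤ x.2.1 ∧ x.1 + x.2.1 ≤ 1 ∧ δ < x.2.2}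

/-- `P ∈ D` is a Lyapunov-stable equilibrium of `g`: `g(P) = 0` and there are `r₀ > 0` and a
continuously differentiable `V` with `V(P) = 0`, `V(x) > 0` and `⟨∇V(x), g(x)⟩ < 0` for all
`x ∈ D ∩ B(P,r₀)`, `x ≠ P`. -/
def IsLyapunovStableEquilibrium (g : ℝ × ℝ × ℝ → ℝ × ℝ × ℝ) (D : Set (ℝ × ℝ × ℝ))
    (P : ℝ × ℝ × ℝ) : Prop :=
  P ∈ D ∧ g P = 0 ∧
    ∃ r₀ > (0 : ℝ), ∃ V : ℝ × ℝ × ℝ → ℝ, ContDiff ℝ 1 V ∧ V P = 0 ∧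
      ∀ x ∈ D ∩ Metric.ball P r₀, x ≠ P → 0 < V x ∧ fderiv ℝ V x (g x) < 0

section WeightedSqDist

variable {K ε : ℝ} {P : ℝ × ℝ × ℝ}

noncomputable def weightedSqDist (K ε : ℝ) (P x : ℝ × ℝ × ℝ) : ℝ :=
  (x.1 - P.1) ^ 2 + K * (x.2.1 - P.2.1) ^ 2 + ε * (x.2.2 - P.2.2) ^ 2

theorem weightedSqDist_self : weightedSqDist K ε P P = 0 := by
  simp [weightedSqDist]

theorem weightedSqDist_pos {x : ℝ × ℝ × ℝ} (hK : 0 < K) (hε : 0 < ε) (hx : x ≠ P) :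
    0 < weightedSqDist K ε P x := by
  have hcoord : x.1 - P.1 ≠ 0 ∨ x.2.1 - P.2.1 ≠ 0 ∨ x.2.2 - P.2.2 ≠ 0 := by
    contrapose! hx
    exact Prod.ext (sub_eq_zero.1 hx.1) (Prod.ext (sub_eq_zero.1 hx.2.1) (sub_eq_zero.1 hx.2.2))
  unfold weightedSqDist
  rcases hcoord with h | h | h <;> positivity

theorem contDiff_weightedSqDist {n : WithTop ℕ∞} : ContDiff ℝ n (weightedSqDist K ε P) := by
  unfold weightedSqDist
  fun_prop

theorem fderiv_weightedSqDist (x h : ℝ × ℝ × ℝ) :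
    fderiv ℝ (weightedSqDist K ε P) x h =
      2 * (x.1 - P.1) * h.1 + K * (2 * (x.2.1 - P.2.1) * h.2.1) +
        ε * (2 * (x.2.2 - P.2.2) * h.2.2) := by
  have h₁ := hasFDerivAt_fst (𝕜 := ℝ) (p := x)
  have h₂ := (hasFDerivAt_snd (𝕜 := ℝ) (p := x)).fst
  have h₃ := (hasFDerivAt_snd (𝕜 := ℝ) (p := x)).snd
  have hV : HasFDerivAt (weightedSqDist K ε P) _ x :=
    (((h₁.sub_const P.1).pow 2).add (((h₂.sub_const P.2.1).pow 2).const_mul K)).add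
      (((h₃.sub_const P.2.2).pow 2).const_mul ε)
  rw [hV.fderiv]
  simp

theorem isLyapunovStableEquilibrium_of_weightedSqDist {g : ℝ × ℝ × ℝ → ℝ × ℝ × ℝ}
    {D : Set (ℝ × ℝ × ℝ)} {r₀ : ℝ} (hP : P ∈ D) (hg : g P = 0) (hK : 0 < K) (hε : 0 < ε)
    (hr₀ : 0 < r₀)
    (hdecr : ∀ x ∈ D ∩ Metric.ball P r₀, x ≠ P →
      2 * (x.1 - P.1) * (g x).1 + K * (2 * (x.2.1 - P.2.1) * (g x).2.1) +
        ε * (2 * (x.2.2 - P.2.2) * (g x).2.2) < 0) :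
    IsLyapunovStableEquilibrium g D P :=
  ⟨hP, hg, r₀, hr₀, weightedSqDist K ε P, contDiff_weightedSqDist, weightedSqDist_self,
    fun x hx hne => ⟨weightedSqDist_pos hK hε hne,
      (fderiv_weightedSqDist x (g x)).trans_lt (hdecr x hx hne)⟩⟩

end WeightedSqDist

theorem add_mul_add_mul_neg {a p c C K ε u v w T₁ T₂ T₃ : ℝ} (ha : 0 < a) (hK : 0 ≤ K)
    (hε : 0 < ε) (hKc : a + p ≤ K * c) (hεC : 2 * ε * C ≤ a)
    (h₁ : T₁ ≤ -a * u ^ 2 + p * v ^ 2) (h₂ : T₂ ≤ -c * v ^ 2)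
    (h₃ : T₃ ≤ -w ^ 2 + C * (u ^ 2 + v ^ 2)) (hne : u ≠ 0 ∨ v ≠ 0 ∨ w ≠ 0) :
    T₁ + K * T₂ + ε * T₃ < 0 := by
  have hKT₂ : K * T₂ ≤ -(K * c) * v ^ 2 := by nlinarith [mul_le_mul_of_nonneg_left h₂ hK]
  have hεT₃ : ε * T₃ ≤ -ε * w ^ 2 + a / 2 * (u ^ 2 + v ^ 2) := by
    nlinarith [mul_le_mul_of_nonneg_left h₃ hε.le,
      mul_le_mul_of_nonneg_right hεC (add_nonneg (sq_nonneg u) (sq_nonneg v))]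
  have hsum : 0 < a / 2 * u ^ 2 + a / 2 * v ^ 2 + ε * w ^ 2 := by
    rcases hne with h | h | h <;> positivity
  nlinarith [mul_le_mul_of_nonneg_right hKc (sq_nonneg v)]

theorem abs_div_sub_div_le {c m x y : ℝ} (hc : 0 ≤ c) (hm : 0 < m) (hx : m ≤ x) (hy : m ≤ y) :
    |c / x - c / y| ≤ c / m ^ 2 * |x - y| := by
  have hx₀ : 0 < x := hm.trans_le hx
  have hy₀ : 0 < y := hm.trans_le hy
  have hxy : m ^ 2 ≤ x * y := by nlinarith
  have hsub : c / x - c / y = c * (y - x) / (x * y) := by field_simp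
  rw [hsub, abs_div, abs_mul, abs_of_nonneg hc, abs_of_pos (mul_pos hx₀ hy₀), abs_sub_comm,
    mul_div_right_comm]
  gcongr

section Model

variable {lam r b ν d θh ηh θ ψ η : ℝ}

theorem le_varrho (hlam : 0 ≤ lam) (hr : 0 ≤ r) (hν : 0 ≤ ν) (hd : 0 ≤ d) (hθ : 0 ≤ θ)
    (hθψ : θ + ψ ≤ 1) : b ≤ varrho lam r b ν d θ ψ := by
  have hφ : 0 ≤ 1 - θ - ψ := by linarith
  unfold varrho
  nlinarith [mul_nonneg (mul_nonneg hlam hθ) hφ, mul_nonneg hν hφ, mul_nonneg hr hθ]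

theorem varrho_le (hlam : 0 ≤ lam) (hr : 0 ≤ r) (hν : 0 ≤ ν) (hθ : 0 ≤ θ) (hψ : 0 ≤ ψ)
    (hθψ : θ + ψ ≤ 1) : varrho lam r b ν d θ ψ ≤ b + d + lam + ν + r := by
  have hθφ : θ * (1 - θ - ψ) ≤ 1 := by nlinarith
  unfold varrho
  nlinarith [mul_le_mul_of_nonneg_left hθφ hlam, mul_nonneg hν hψ,
    mul_nonneg hr (by linarith : (0 : ℝ) ≤ 1 - θ)]

theorem abs_varrho_sub_varrho_le {θ' ψ' : ℝ} (hlam : 0 ≤ lam) (hr : 0 ≤ r) (hν : 0 ≤ ν)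
    (hθ : 0 ≤ θ) (hψ : 0 ≤ ψ) (hθψ : θ + ψ ≤ 1) (hθ'₀ : 0 ≤ θ') (hθ'₁ : θ' ≤ 1) :
    |varrho lam r b ν d θ ψ - varrho lam r b ν d θ' ψ'| ≤
      (2 * lam + ν + r) * (|θ - θ'| + |ψ - ψ'|) := by
  set a := θ - θ'
  set c := ψ - ψ'
  have hφ : |1 - θ - ψ| ≤ 1 := abs_le.2 ⟨by linarith, by linarith⟩
  have hθ' : |θ'| ≤ 1 := abs_le.2 ⟨by linarith, hθ'₁⟩
  have hac : |a + c| ≤ |a| + |c| := abs_add_le a c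
  have hsplit : varrho lam r b ν d θ ψ - varrho lam r b ν d θ' ψ' =
      lam * (a * (1 - θ - ψ) - θ' * (a + c)) - ν * (a + c) + r * a := by
    unfold varrho; ring
  have hprod : |a * (1 - θ - ψ) - θ' * (a + c)| ≤ 2 * |a| + |c| :=
    calc |a * (1 - θ - ψ) - θ' * (a + c)| ≤ |a| * |1 - θ - ψ| + |θ'| * |a + c| := by
          rw [← abs_mul, ← abs_mul]; exact abs_sub _ _
      _ ≤ |a| * 1 + 1 * (|a| + |c|) := by gcongr
      _ = 2 * |a| + |c| := by ring
  calc |varrho lam r b ν d θ ψ - varrho lam r b ν d θ' ψ'|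
      ≤ |lam * (a * (1 - θ - ψ) - θ' * (a + c))| + |ν * (a + c)| + |r * a| := by
        rw [hsplit]; exact (abs_add_le _ _).trans (add_le_add_left (abs_sub _ _) _)
    _ = lam * |a * (1 - θ - ψ) - θ' * (a + c)| + ν * |a + c| + r * |a| := by
        rw [abs_mul, abs_mul, abs_mul, abs_of_nonneg hlam, abs_of_nonneg hν, abs_of_nonneg hr]
    _ ≤ lam * (2 * |a| + |c|) + ν * (|a| + |c|) + r * |a| := by gcongr
    _ ≤ (2 * lam + ν + r) * (|a| + |c|) := by nlinarith [abs_nonneg a, abs_nonneg c]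

theorem epiVF_eq_zero_of_endemic {q : ℝ → ℝ → ℝ} (hq : q θh 0 = 0)
    (hpl : (1 - θh) * lam = r + b) (hηh : ηh = (b - d) / varrho lam r b ν d θh 0) :
    epiVF lam r b ν d q (θh, 0, ηh) = 0 := by
  have hθ : (1 - θh - 0) * lam - r - b = 0 := by linear_combination hpl
  simp only [epiVF, hq, hθ, hηh, Prod.mk_eq_zero]
  norm_num

theorem epiVF_fst_eq (q : ℝ → ℝ → ℝ) (hpl : (1 - θh) * lam = r + b) :
    (epiVF lam r b ν d q (θ, ψ, η)).1 =
      θ / (η * varrho lam r b ν d θ ψ) * -(lam * (θ - θh + ψ)) := by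
  simp only [epiVF]
  congr 1
  linear_combination hpl

theorem two_mul_epiVF_fst_le {A₁ A₂ : ℝ} (q : ℝ → ℝ → ℝ) (hpl : (1 - θh) * lam = r + b)
    (hlam : 0 ≤ lam) (hA₁ : 0 ≤ A₁) (h₁ : A₁ ≤ θ / (η * varrho lam r b ν d θ ψ))
    (h₂ : θ / (η * varrho lam r b ν d θ ψ) ≤ A₂) :
    2 * (θ - θh) * (epiVF lam r b ν d q (θ, ψ, η)).1 ≤
      -(lam * A₁) * (θ - θh) ^ 2 + lam * A₂ * ψ ^ 2 := by
  rw [epiVF_fst_eq q hpl]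
  set s := θ / (η * varrho lam r b ν d θ ψ)
  have hs : 0 ≤ lam * s := mul_nonneg hlam (hA₁.trans h₁)
  nlinarith [mul_nonneg hs (sq_nonneg (θ - θh + ψ)),
    mul_nonneg (mul_nonneg hlam (sub_nonneg.2 h₁)) (sq_nonneg (θ - θh)),
    mul_nonneg (mul_nonneg hlam (sub_nonneg.2 h₂)) (sq_nonneg ψ)]

theorem two_mul_epiVF_snd_le {βh c₀ M : ℝ} (hβψ : βh * ψ ≤ 1)
    (hD : 0 < η * varrho lam r b ν d θ ψ) (hDM : η * varrho lam r b ν d θ ψ ≤ M)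
    (hc₀ : 0 ≤ c₀) (hc : 2 * (βh * (1 - θ - ψ) * ν - b) ≤ -c₀) :
    2 * ψ * (epiVF lam r b ν d (fun _ ψ => min (βh * ψ) 1) (θ, ψ, η)).2.1 ≤
      -(c₀ / M) * ψ ^ 2 := by
  simp only [epiVF, min_eq_left hβψ]
  set D := η * varrho lam r b ν d θ ψ
  calc 2 * ψ * (1 / D * (βh * ψ * (1 - θ - ψ) * ν - b * ψ))
      = ψ ^ 2 * (2 * (βh * (1 - θ - ψ) * ν - b)) / D := by field_simp
    _ ≤ ψ ^ 2 * -c₀ / D := by gcongr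
    _ = -(c₀ / D) * ψ ^ 2 := by ring
    _ ≤ -(c₀ / M) * ψ ^ 2 := by gcongr

theorem two_mul_epiVF_thd_le (q : ℝ → ℝ → ℝ) (hlam : 0 ≤ lam) (hr : 0 ≤ r) (hb : 0 < b)
    (hν : 0 ≤ ν) (hd : 0 ≤ d) (hbd : d ≤ b) (hθ : 0 ≤ θ) (hψ : 0 ≤ ψ) (hθψ : θ + ψ ≤ 1)
    (hθh₀ : 0 ≤ θh) (hθh₁ : θh ≤ 1) {ηh : ℝ} (hηh : ηh = (b - d) / varrho lam r b ν d θh 0) :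
    2 * (η - ηh) * (epiVF lam r b ν d q (θ, ψ, η)).2.2 ≤
      -(η - ηh) ^ 2 + 2 * ((b - d) / b ^ 2 * (2 * lam + ν + r)) ^ 2 * ((θ - θh) ^ 2 + ψ ^ 2) := by
  set X := (b - d) / varrho lam r b ν d θ ψ - (b - d) / varrho lam r b ν d θh 0
  have hg : (epiVF lam r b ν d q (θ, ψ, η)).2.2 = X - (η - ηh) := by
    simp only [epiVF, X, hηh]; ring
  have hX : |X| ≤ (b - d) / b ^ 2 * ((2 * lam + ν + r) * (|θ - θh| + |ψ|)) := by
    have hlip := abs_varrho_sub_varrho_le (b := b) (d := d) (ψ' := 0) hlam hr hν hθ hψ hθψ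
      hθh₀ hθh₁
    rw [sub_zero] at hlip
    exact (abs_div_sub_div_le (sub_nonneg.2 hbd) hb (le_varrho hlam hr hν hd hθ hθψ)
      (le_varrho hlam hr hν hd hθh₀ (by linarith))).trans (by gcongr)
  have hX2 : X ^ 2 ≤ 2 * ((b - d) / b ^ 2 * (2 * lam + ν + r)) ^ 2 * ((θ - θh) ^ 2 + ψ ^ 2) := by
    rw [← sq_abs X, ← sq_abs (θ - θh), ← sq_abs ψ]
    have := pow_le_pow_left₀ (abs_nonneg X) hX 2
    nlinarith [sq_nonneg (|θ - θh| - |ψ|), sq_nonneg ((b - d) / b ^ 2 * (2 * lam + ν + r))]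
  rw [hg]
  nlinarith [sq_nonneg (X - (η - ηh))]

theorem nvdf_orbital_deriv_neg {δ βh K ε c₀ A₁ A₂ M : ℝ} (hlam : 0 < lam) (hr : 0 ≤ r)
    (hb : 0 < b) (hν : 0 ≤ ν) (hd : 0 ≤ d) (hbd : d ≤ b) (hδ : 0 ≤ δ) (hθh₀ : 0 ≤ θh)
    (hθh₁ : θh ≤ 1) (hpl : (1 - θh) * lam = r + b)
    (hηh : ηh = (b - d) / varrho lam r b ν d θh 0)
    (hx : (θ, ψ, η) ∈ domD δ) (hne : (θ, ψ, η) ≠ (θh, 0, ηh))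
    (hA₁ : 0 < A₁) (hs₁ : A₁ ≤ θ / (η * varrho lam r b ν d θ ψ))
    (hs₂ : θ / (η * varrho lam r b ν d θ ψ) ≤ A₂) (hM : η * varrho lam r b ν d θ ψ ≤ M)
    (hβψ : βh * ψ ≤ 1) (hc₀ : 0 ≤ c₀) (hc : 2 * (βh * (1 - θ - ψ) * ν - b) ≤ -c₀)
    (hK : 0 ≤ K) (hKc : lam * A₁ + lam * A₂ ≤ K * (c₀ / M)) (hε : 0 < ε)
    (hεC : 2 * ε * (2 * ((b - d) / b ^ 2 * (2 * lam + ν + r)) ^ 2) ≤ lam * A₁) :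
    2 * (θ - θh) * (epiVF lam r b ν d (fun _ ψ => min (βh * ψ) 1) (θ, ψ, η)).1 +
        K * (2 * ψ * (epiVF lam r b ν d (fun _ ψ => min (βh * ψ) 1) (θ, ψ, η)).2.1) +
        ε * (2 * (η - ηh) * (epiVF lam r b ν d (fun _ ψ => min (βh * ψ) 1) (θ, ψ, η)).2.2) <
      0 := by
  obtain ⟨hθ, hψ, hθψ, hδη⟩ := hx
  have hD : 0 < η * varrho lam r b ν d θ ψ :=
    mul_pos (hδ.trans_lt hδη) (hb.trans_le (le_varrho hlam.le hr hν hd hθ hθψ))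
  have hcoord : θ - θh ≠ 0 ∨ ψ ≠ 0 ∨ η - ηh ≠ 0 := by
    contrapose! hne
    rw [sub_eq_zero.1 hne.1, hne.2.1, sub_eq_zero.1 hne.2.2]
  exact add_mul_add_mul_neg (mul_pos hlam hA₁) hK hε hKc hεC
    (two_mul_epiVF_fst_le _ hpl hlam.le hA₁.le hs₁ hs₂)
    (two_mul_epiVF_snd_le hβψ hD hM hc₀ hc)
    (two_mul_epiVF_thd_le _ hlam.le hr hb hν hd hbd hθ hψ hθψ hθh₀ hθh₁ hηh) hcoord

theorem nvdf_bounds_of_mem_ball {βh r₀ : ℝ} (hβ : 0 ≤ βh) (hν : 0 ≤ ν) (hψ : 0 ≤ ψ)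
    (hr₀θ : r₀ ≤ θh / 2) (hr₀η : r₀ ≤ 1) (hr₀ψ : r₀ * (βh + 1) ≤ 1)
    (hr₀c : r₀ * (2 * βh * ν + 1) ≤ b - βh * ν * (1 - θh))
    (hx : (θ, ψ, η) ∈ Metric.ball (θh, 0, ηh) r₀) :
    θh / 2 ≤ θ ∧ η ≤ ηh + 1 ∧ βh * ψ ≤ 1 ∧
      2 * (βh * (1 - θ - ψ) * ν - b) ≤ -(b - βh * ν * (1 - θh)) := by
  simp only [Metric.mem_ball, Prod.dist_eq, Real.dist_eq, max_lt_iff, sub_zero, abs_lt] at hx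
  obtain ⟨⟨hθ, -⟩, ⟨-, hψr⟩, ⟨-, hη⟩⟩ := hx
  refine ⟨by linarith, by linarith, by nlinarith, ?_⟩
  nlinarith [mul_le_mul_of_nonneg_left (by linarith : θh - θ ≤ r₀) (by positivity : 0 ≤ βh * ν),
    mul_nonneg (mul_nonneg hβ hν) hψ]

theorem exists_nvdf_orbital_deriv_neg {δ βh : ℝ} (hlam : 0 < lam) (hr : 0 < r) (hb : 0 < b)
    (hν : 0 < ν) (hd : 0 ≤ d) (hbd : d ≤ b) (hδ : 0 < δ) (hβ : 0 ≤ βh) (hθh₀ : 0 < θh)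
    (hθh₁ : θh ≤ 1) (hpl : (1 - θh) * lam = r + b)
    (hηh : ηh = (b - d) / varrho lam r b ν d θh 0) (hc₀ : 0 < b - βh * ν * (1 - θh)) :
    ∃ K > 0, ∃ ε > 0, ∃ r₀ > 0, ∀ x ∈ domD δ ∩ Metric.ball (θh, 0, ηh) r₀, x ≠ (θh, 0, ηh) →
      2 * (x.1 - θh) * (epiVF lam r b ν d (fun _ ψ => min (βh * ψ) 1) x).1 +
        K * (2 * x.2.1 * (epiVF lam r b ν d (fun _ ψ => min (βh * ψ) 1) x).2.1) +
        ε * (2 * (x.2.2 - ηh) * (epiVF lam r b ν d (fun _ ψ => min (βh * ψ) 1) x).2.2) < 0 := by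
  set c₀ := b - βh * ν * (1 - θh)
  set Mϱ := b + d + lam + ν + r
  set M := (ηh + 1) * Mϱ
  set A₁ := θh / 2 / M
  set A₂ := 1 / (δ * b)
  set C := 2 * ((b - d) / b ^ 2 * (2 * lam + ν + r)) ^ 2
  have hηh₀ : 0 ≤ ηh :=
    hηh ▸ div_nonneg (sub_nonneg.2 hbd) (hb.le.trans (le_varrho hlam.le hr.le hν.le hd
      hθh₀.le (by linarith)))
  have hA₁ : 0 < A₁ := by positivity
  have hM : 0 < M := by positivity
  have hKc : lam * A₁ + lam * A₂ ≤ (lam * A₁ + lam * A₂) * M / c₀ * (c₀ / M) :=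
    le_of_eq (by field_simp)
  have hεC : 2 * (lam * A₁ / (2 * C + 1)) * C ≤ lam * A₁ := by
    have hε : lam * A₁ / (2 * C + 1) * (2 * C + 1) = lam * A₁ :=
      div_mul_cancel₀ _ (by positivity)
    nlinarith [(by positivity : 0 < lam * A₁ / (2 * C + 1))]
  set r₀ := min (min (θh / 2) 1) (min (1 / (βh + 1)) (c₀ / (2 * βh * ν + 1)))
  have hr₀θ : r₀ ≤ θh / 2 := (min_le_left _ _).trans (min_le_left _ _)
  have hr₀η : r₀ ≤ 1 := (min_le_left _ _).trans (min_le_right _ _)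
  have hr₀ψ : r₀ ≤ 1 / (βh + 1) := (min_le_right _ _).trans (min_le_left _ _)
  have hr₀c : r₀ ≤ c₀ / (2 * βh * ν + 1) := (min_le_right _ _).trans (min_le_right _ _)
  refine ⟨(lam * A₁ + lam * A₂) * M / c₀, by positivity, lam * A₁ / (2 * C + 1), by positivity,
    r₀, by positivity, ?_⟩
  rintro ⟨θ, ψ, η⟩ ⟨hx, hball⟩ hne
  obtain ⟨hθ, hψ, hθψ, hδη⟩ : 0 ≤ θ ∧ 0 ≤ ψ ∧ θ + ψ ≤ 1 ∧ δ < η := hx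
  obtain ⟨hθ', hη', hβψ, hc⟩ := nvdf_bounds_of_mem_ball hβ hν.le hψ hr₀θ hr₀η
    ((le_div_iff₀ (by positivity)).1 hr₀ψ) ((le_div_iff₀ (by positivity)).1 hr₀c) hball
  have hϱ : b ≤ varrho lam r b ν d θ ψ := le_varrho hlam.le hr.le hν.le hd hθ hθψ
  have hD : 0 < η * varrho lam r b ν d θ ψ := mul_pos (hδ.trans hδη) (hb.trans_le hϱ)
  have hDM : η * varrho lam r b ν d θ ψ ≤ M :=
    mul_le_mul hη' (varrho_le hlam.le hr.le hν.le hθ hψ hθψ) (by linarith) (by positivity)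
  have hs₁ : A₁ ≤ θ / (η * varrho lam r b ν d θ ψ) := div_le_div₀ hθ hθ' hD hDM
  have hs₂ : θ / (η * varrho lam r b ν d θ ψ) ≤ A₂ :=
    div_le_div₀ zero_le_one (by linarith) (by positivity) (mul_le_mul hδη.le hϱ hb.le (by linarith))
  exact nvdf_orbital_deriv_neg hlam hr.le hb hν.le hd hbd hδ.le hθh₀.le hθh₁ hpl hηh
    ⟨hθ, hψ, hθψ, hδη⟩ hne hA₁ hs₁ hs₂ hDM hβψ hc₀.le hc (by positivity) hKc (by positivity) hεC

end Model

/-- Follow-the-crowd response `q = min{β̂ψ, 1}`, endemic disease `ρ > 1`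
with `β̂ < μρ`: the NVDF point `(1 − 1/ρ, 0, η̂)` is a Lyapunov-stable equilibrium of `g`. -/
theorem stmt_5 (lam r b ν d δ βh ρ μ θh ψh ηh : ℝ)
    (hlam : 0 < lam) (hr : 0 < r) (hb : 0 < b) (hν : 0 < ν)
    (hd : 0 ≤ d) (hbd : d < b) (hδ : 0 < δ) (hβ : 0 ≤ βh)
    (hρdef : ρ = lam / (r + b)) (hμdef : μ = b / ν)
    (hρ : 1 < ρ) (hβlt : βh < μ * ρ)
    (hθ : θh = 1 - 1 / ρ) (hψ : ψh = 0)
    (hηdef : ηh = (b - d) / varrho lam r b ν d θh ψh) (hη : δ < ηh) :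
    IsLyapunovStableEquilibrium
      (epiVF lam r b ν d (fun _ ψ => min (βh * ψ) 1)) (domD δ) (θh, ψh, ηh) := by
  subst hψ
  have hρ₀ : 0 < ρ := by linarith
  have hθh₀ : 0 < θh := by rw [hθ, sub_pos, div_lt_one hρ₀]; exact hρ
  have hθh₁ : θh ≤ 1 := by rw [hθ]; linarith [one_div_pos.2 hρ₀]
  have hpl : (1 - θh) * lam = r + b := by rw [hθ, hρdef]; field_simp; ring
  have hc₀ : 0 < b - βh * ν * (1 - θh) := by
    rw [hμdef, div_mul_eq_mul_div, lt_div_iff₀ hν] at hβlt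
    rw [hθ, sub_sub_cancel, sub_pos, mul_one_div, div_lt_iff₀ hρ₀]
    linarith
  obtain ⟨K, hK, ε, hε, r₀, hr₀, hdecr⟩ := exists_nvdf_orbital_deriv_neg hlam hr hb hν hd hbd.le
    hδ hβ hθh₀ hθh₁ hpl hηdef hc₀
  refine isLyapunovStableEquilibrium_of_weightedSqDist ⟨hθh₀.le, le_rfl, by simpa, hη⟩
    (epiVF_eq_zero_of_endemic (by simp) hpl hηdef) hK hε hr₀ fun x hx hne => ?_
  simpa only [sub_zero] using hdecr x hx hne
end

section
/- Fix reals λ, r, b, ν > 0, d ≥ 0 with b > d, δ > 0, and β̂ > 0, and let q(θ,ψ) := min{β̂ψ, 1} (follow-the-crowd response). Set ρ := λ/(r+b) and μ := b/ν, and assume ρ > 1, β̂ > μ + 1 and μρ < μ + 1. Let θ̂ := 0, ψ̂ := 1/(μ+1), and η̂ := (b−d)/ϱ(θ̂,ψ̂). If η̂ > δ, then the point P := (θ̂, ψ̂, η̂) is a Lyapunov-stable equilibrium of g. -/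
/-!
Take `V = θ + (ψ - ψ̂)² + C (η - η̂)²`, which may be linear in `θ` because `θ ≥ 0` on `D`.
Near `P` the response saturates, `q = 1`, and with `u = ψ - ψ̂`, `w = η - η̂` the derivative of
`V` along `g` splits as `θ A(x) - Q_x(u, w)` with `Q_x` a quadratic form. At `P` one has
`η̂ ϱ(P) = b - d`, so `A(P) = ((1 - ψ̂)λ - r - b) / (b - d)`, which is negative exactly when
`μρ < μ + 1`; and `Q_P` is positive definite as soon as the weight `C` is small. Both
properties persist on a ball around `P` by continuity.
-/

open Filter Topology

theorem quadratic_form_pos {K : Type*} [Field K] [LinearOrder K] [IsStrictOrderedRing K]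
    {a b c u w : K} (ha : 0 < a) (hdisc : b ^ 2 < 4 * a * c)
    (huw : u ≠ 0 ∨ w ≠ 0) : 0 < a * u ^ 2 - b * u * w + c * w ^ 2 := by
  have key : 4 * a * (a * u ^ 2 - b * u * w + c * w ^ 2)
      = (2 * a * u - b * w) ^ 2 + (4 * a * c - b ^ 2) * w ^ 2 := by ring
  refine pos_of_mul_pos_right (a := 4 * a) ?_ (by positivity)
  rw [key]
  rcases eq_or_ne w 0 with rfl | hw
  · have hu : u ≠ 0 := huw.resolve_right (not_not.mpr rfl)
    simp only [mul_zero, sub_zero, ne_eq, OfNat.ofNat_ne_zero, not_false_eq_true, zero_pow, add_zero]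
    positivity
  · have := sq_nonneg (2 * a * u - b * w)
    have : 0 < (4 * a * c - b ^ 2) * w ^ 2 := mul_pos (by linarith) (by positivity)
    linarith

theorem ne_triple_iff {α β γ : Type*} [AddGroup β] [AddGroup γ] {x : α × β × γ} {a : α} {b : β}
    {c : γ} :
    x ≠ (a, b, c) ↔ x.1 ≠ a ∨ x.2.1 - b ≠ 0 ∨ x.2.2 - c ≠ 0 := by
  obtain ⟨θ, ψ, η⟩ := x
  simp only [ne_eq, Prod.mk.injEq, sub_eq_zero, not_and_or]

noncomputable def lyapunovFn (ψh ηh C : ℝ) (x : ℝ × ℝ × ℝ) : ℝ :=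
  x.1 + (x.2.1 - ψh) ^ 2 + C * (x.2.2 - ηh) ^ 2

section Lyapunov
variable {ψh ηh C : ℝ}

theorem contDiff_lyapunovFn : ContDiff ℝ 1 (lyapunovFn ψh ηh C) := by
  unfold lyapunovFn; fun_prop

theorem lyapunovFn_pos (hC : 0 < C) {x : ℝ × ℝ × ℝ} (hθ : 0 ≤ x.1) (hx : x ≠ (0, ψh, ηh)) :
    0 < lyapunovFn ψh ηh C x := by
  unfold lyapunovFn
  rcases ne_triple_iff.mp hx with h | h | h
  · have : 0 < x.1 := lt_of_le_of_ne hθ (Ne.symm h)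
    positivity
  · have : 0 < (x.2.1 - ψh) ^ 2 := by positivity
    positivity
  · have : 0 < (x.2.2 - ηh) ^ 2 := by positivity
    positivity

theorem fderiv_lyapunovFn_apply (x v : ℝ × ℝ × ℝ) :
    fderiv ℝ (lyapunovFn ψh ηh C) x v
      = v.1 + 2 * (x.2.1 - ψh) * v.2.1 + 2 * C * (x.2.2 - ηh) * v.2.2 := by
  have hψ : HasFDerivAt (fun y : ℝ × ℝ × ℝ => y.2.1 - ψh)
      ((ContinuousLinearMap.fst ℝ ℝ ℝ).comp (ContinuousLinearMap.snd ℝ ℝ (ℝ × ℝ))) x :=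
    (hasFDerivAt_fst.comp x hasFDerivAt_snd).sub_const ψh
  have hη : HasFDerivAt (fun y : ℝ × ℝ × ℝ => y.2.2 - ηh)
      ((ContinuousLinearMap.snd ℝ ℝ ℝ).comp (ContinuousLinearMap.snd ℝ ℝ (ℝ × ℝ))) x :=
    (hasFDerivAt_snd.comp x hasFDerivAt_snd).sub_const ηh
  have hV : HasFDerivAt (lyapunovFn ψh ηh C) _ x :=
    (hasFDerivAt_fst.add (hψ.pow 2)).add ((hη.pow 2).const_mul C)
  rw [hV.fderiv]
  simp only [Nat.add_one_sub_one, pow_one, nsmul_eq_mul, Nat.cast_ofNat, add_apply,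
    ContinuousLinearMap.coe_fst', smul_apply, ContinuousLinearMap.comp_apply,
    ContinuousLinearMap.coe_snd', smul_eq_mul, add_right_inj]
  ring

end Lyapunov

theorem continuous_varrho (lam r b ν d : ℝ) :
    Continuous fun x : ℝ × ℝ × ℝ => varrho lam r b ν d x.1 x.2.1 := by
  unfold varrho; fun_prop

section Rates
variable (lam r b ν d ψh ηh C : ℝ)

noncomputable def lyapunovThetaRate (x : ℝ × ℝ × ℝ) : ℝ :=
  ((1 - x.1 - x.2.1) * lam - r - b - 2 * ν * (x.2.1 - ψh)) /
      (x.2.2 * varrho lam r b ν d x.1 x.2.1) +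
    2 * C * (x.2.2 - ηh) * (b - d) * (ν - lam * (1 - x.1 - x.2.1) - r) /
      (varrho lam r b ν d x.1 x.2.1 * varrho lam r b ν d 0 ψh)

noncomputable def lyapunovPsiRate (x : ℝ × ℝ × ℝ) : ℝ :=
  2 * (ν + b) / (x.2.2 * varrho lam r b ν d x.1 x.2.1)

noncomputable def lyapunovCoupling (x : ℝ × ℝ × ℝ) : ℝ :=
  (b - d) * ν / (varrho lam r b ν d x.1 x.2.1 * varrho lam r b ν d 0 ψh)

variable {lam r b ν d ψh ηh C}

theorem fderiv_lyapunovFn_epiVF {q : ℝ → ℝ → ℝ} {x : ℝ × ℝ × ℝ} (hq : q x.1 x.2.1 = 1)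
    (hbψ : ν * (1 - ψh) = b * ψh) (hηh : ηh = (b - d) / varrho lam r b ν d 0 ψh)
    (hϱ : varrho lam r b ν d x.1 x.2.1 ≠ 0) (hϱh : varrho lam r b ν d 0 ψh ≠ 0) :
    fderiv ℝ (lyapunovFn ψh ηh C) x (epiVF lam r b ν d q x)
      = x.1 * lyapunovThetaRate lam r b ν d ψh ηh C x
        - (lyapunovPsiRate lam r b ν d x * (x.2.1 - ψh) ^ 2
          - 2 * C * lyapunovCoupling lam r b ν d ψh x * (x.2.1 - ψh) * (x.2.2 - ηh)
          + 2 * C * (x.2.2 - ηh) ^ 2) := by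
  obtain ⟨θ, ψ, η⟩ := x
  have hη : (b - d) / varrho lam r b ν d θ ψ - η
      = (b - d) * (θ * (ν - lam * (1 - θ - ψ) - r) + ν * (ψ - ψh))
          / (varrho lam r b ν d θ ψ * varrho lam r b ν d 0 ψh) - (η - ηh) := by
    rw [hηh]
    field_simp
    simp only [varrho]
    ring
  rw [fderiv_lyapunovFn_apply]
  simp only [epiVF, hq, hη, lyapunovThetaRate, lyapunovPsiRate, lyapunovCoupling]
  linear_combination 2 * (ψ - ψh) / (η * varrho lam r b ν d θ ψ) * hbψ

theorem epiVF_diseaseFree_eq_zero {q : ℝ → ℝ → ℝ} (hq : q 0 ψh = 1)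
    (hbψ : ν * (1 - ψh) = b * ψh) (hηdef : ηh = (b - d) / varrho lam r b ν d 0 ψh) :
    epiVF lam r b ν d q (0, ψh, ηh) = 0 := by
  simp only [epiVF, hq, Prod.mk_eq_zero, zero_div, zero_mul, true_and, ← hηdef, sub_self,
    and_true]
  rw [sub_zero, one_mul, mul_comm (1 - ψh), hbψ, sub_self, mul_zero]

theorem eventually_lyapunovRates (hϱh : 0 < varrho lam r b ν d 0 ψh) (hηh : 0 < ηh)
    (hK : (1 - ψh) * lam < r + b) (hψP : 0 < lyapunovPsiRate lam r b ν d (0, ψh, ηh))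
    (hC : C * lyapunovCoupling lam r b ν d ψh (0, ψh, ηh) ^ 2
      < 2 * lyapunovPsiRate lam r b ν d (0, ψh, ηh)) :
    ∀ᶠ x in 𝓝 (0, ψh, ηh), varrho lam r b ν d x.1 x.2.1 ≠ 0 ∧
      lyapunovThetaRate lam r b ν d ψh ηh C x < 0 ∧ 0 < lyapunovPsiRate lam r b ν d x ∧
      C * lyapunovCoupling lam r b ν d ψh x ^ 2 < 2 * lyapunovPsiRate lam r b ν d x := by
  have hϱ := continuous_varrho lam r b ν d
  have hϱP : varrho lam r b ν d 0 ψh ≠ 0 := hϱh.ne'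
  have hSP : ηh * varrho lam r b ν d 0 ψh ≠ 0 := (mul_pos hηh hϱh).ne'
  have hθ : ContinuousAt (lyapunovThetaRate lam r b ν d ψh ηh C) (0, ψh, ηh) := by
    unfold lyapunovThetaRate; fun_prop (disch := simpa)
  have hψ : ContinuousAt (lyapunovPsiRate lam r b ν d) (0, ψh, ηh) := by
    unfold lyapunovPsiRate; fun_prop (disch := simpa)
  have hk : ContinuousAt (lyapunovCoupling lam r b ν d ψh) (0, ψh, ηh) := by
    unfold lyapunovCoupling
    exact continuousAt_const.div (hϱ.continuousAt.mul continuousAt_const) (by simpa)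
  have hθP : lyapunovThetaRate lam r b ν d ψh ηh C (0, ψh, ηh) < 0 := by
    simp only [lyapunovThetaRate, sub_self, mul_zero, zero_mul, zero_div, add_zero, sub_zero]
    exact div_neg_of_neg_of_pos (by linarith) (mul_pos hηh hϱh)
  exact (hϱ.continuousAt.eventually_ne hϱP).and <|
    (hθ.eventually_lt continuousAt_const hθP).and <|
    (continuousAt_const.eventually_lt hψ hψP).and <|
    (continuousAt_const.mul (hk.pow 2)).eventually_lt (continuousAt_const.mul hψ) hC

theorem exists_lyapunovFn_fderiv_epiVF_neg {q : ℝ → ℝ → ℝ}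
    (hq : ∀ᶠ x in 𝓝 (0, ψh, ηh), q x.1 x.2.1 = 1) (hνb : 0 < ν + b)
    (hbψ : ν * (1 - ψh) = b * ψh) (hηdef : ηh = (b - d) / varrho lam r b ν d 0 ψh)
    (hϱh : 0 < varrho lam r b ν d 0 ψh) (hηh : 0 < ηh) (hK : (1 - ψh) * lam < r + b) :
    ∃ C > 0, ∀ᶠ x in 𝓝 (0, ψh, ηh), 0 ≤ x.1 → x ≠ (0, ψh, ηh) →
      fderiv ℝ (lyapunovFn ψh ηh C) x (epiVF lam r b ν d q x) < 0 := by
  have hψP : 0 < lyapunovPsiRate lam r b ν d (0, ψh, ηh) := by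
    unfold lyapunovPsiRate; positivity
  obtain ⟨C, hC0, hC⟩ := exists_pos_mul_lt (mul_pos two_pos hψP)
    (lyapunovCoupling lam r b ν d ψh (0, ψh, ηh) ^ 2)
  refine ⟨C, hC0, ?_⟩
  filter_upwards [hq, eventually_lyapunovRates hϱh hηh hK hψP (C := C) (by linarith)]
    with x hqx ⟨hϱ, hθr, hψr, hCx⟩ hθ hx
  rw [fderiv_lyapunovFn_epiVF hqx hbψ hηdef hϱ hϱh.ne']
  have hdisc : (2 * C * lyapunovCoupling lam r b ν d ψh x) ^ 2
      < 4 * lyapunovPsiRate lam r b ν d x * (2 * C) := by nlinarith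
  by_cases huw : x.2.1 - ψh ≠ 0 ∨ x.2.2 - ηh ≠ 0
  · have := quadratic_form_pos hψr hdisc huw
    nlinarith
  · have hθx := (ne_triple_iff.mp hx).resolve_right huw
    push Not at huw
    rw [huw.1, huw.2]
    nlinarith [lt_of_le_of_ne hθ (Ne.symm hθx)]

end Rates

theorem stmt_7_general (lam r b ν d δ βh ρ μ θh ψh ηh : ℝ)
    (hr : 0 < r) (hb : 0 < b) (hν : 0 < ν)
    (hd : 0 ≤ d) (hbd : d < b)
    (hρdef : ρ = lam / (r + b)) (hμdef : μ = b / ν)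
    (hβgt : μ + 1 < βh) (hμρ : μ * ρ < μ + 1)
    (hθ : θh = 0) (hψ : ψh = 1 / (μ + 1))
    (hηdef : ηh = (b - d) / varrho lam r b ν d θh ψh) (hη : δ < ηh) :
    IsLyapunovStableEquilibrium
      (epiVF lam r b ν d (fun _ ψ => min (βh * ψ) 1)) (domD δ) (θh, ψh, ηh) := by
  subst hθ
  have hμ : 0 < μ := hμdef ▸ div_pos hb hν
  have hψh0 : 0 < ψh := hψ ▸ by positivity
  have hψh1 : ψh < 1 := by rw [hψ, div_lt_one (by positivity)]; linarith
  have hbψ : ν * (1 - ψh) = b * ψh := by rw [hψ, hμdef]; field_simp; ring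
  have hϱh : 0 < varrho lam r b ν d 0 ψh := by
    simp only [varrho]; nlinarith
  have hηh : 0 < ηh := hηdef ▸ div_pos (sub_pos.2 hbd) hϱh
  have hK : (1 - ψh) * lam < r + b := by
    rw [hρdef, mul_div_assoc', div_lt_iff₀ (by positivity)] at hμρ
    rw [hψ, one_sub_div (by positivity), div_mul_eq_mul_div, div_lt_iff₀ (by positivity)]
    linarith
  have hβψ : 1 < βh * ψh := by rw [hψ, mul_one_div, one_lt_div (by positivity)]; exact hβgt
  have hq : ∀ᶠ x in 𝓝 ((0 : ℝ), ψh, ηh), min (βh * x.2.1) 1 = 1 :=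
    (continuousAt_const.eventually_lt (f := fun _ => (1 : ℝ)) (g := fun x => βh * x.2.1)
      (by fun_prop) hβψ).mono fun x hx => min_eq_right hx.le
  obtain ⟨C, hC, hV⟩ := exists_lyapunovFn_fderiv_epiVF_neg
    (q := fun _ ψ => min (βh * ψ) 1) hq (by positivity) hbψ hηdef hϱh hηh hK
  obtain ⟨r₀, hr₀, hball⟩ := Metric.eventually_nhds_iff.mp hV
  refine ⟨⟨le_rfl, hψh0.le, by simpa using hψh1.le, hη⟩,
    epiVF_diseaseFree_eq_zero hq.self_of_nhds hbψ hηdef, r₀, hr₀, lyapunovFn ψh ηh C,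
    contDiff_lyapunovFn, by simp [lyapunovFn], fun x ⟨hxD, hxB⟩ hx => ?_⟩
  exact ⟨lyapunovFn_pos hC hxD.1 hx, hball hxB hxD.1 hx⟩

/-- Follow-the-crowd response `q = min{β̂ψ, 1}`, endemic disease `ρ > 1`
with `β̂ > μ + 1` and `μρ < μ + 1`: the disease-free point `(0, 1/(μ+1), η̂)` is a
Lyapunov-stable equilibrium of `g`. -/
theorem stmt_7 (lam r b ν d δ βh ρ μ θh ψh ηh : ℝ)
    (hlam : 0 < lam) (hr : 0 < r) (hb : 0 < b) (hν : 0 < ν)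
    (hd : 0 ≤ d) (hbd : d < b) (hδ : 0 < δ) (hβ : 0 < βh)
    (hρdef : ρ = lam / (r + b)) (hμdef : μ = b / ν)
    (hρ : 1 < ρ) (hβgt : μ + 1 < βh) (hμρ : μ * ρ < μ + 1)
    (hθ : θh = 0) (hψ : ψh = 1 / (μ + 1))
    (hηdef : ηh = (b - d) / varrho lam r b ν d θh ψh) (hη : δ < ηh) :
    IsLyapunovStableEquilibrium
      (epiVF lam r b ν d (fun _ ψ => min (βh * ψ) 1)) (domD δ) (θh, ψh, ηh) :=
  stmt_7_general lam r b ν d δ βh ρ μ θh ψh ηh hr hb hν hd hbd hρdef hμdef hβgt hμρ hθ hψ hηdef hη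
end

section
/- Fix reals λ, r, b, ν > 0 and d_e with 0 < d_e < λ. Set ρ_e := (λ − d_e)/(r+b), B := λb + d_e(r + d_e − λ − ν), ψ* := (−B + √(B² + 4 λ d_e ν (r+b)))/(2 λ d_e), and θ* := 1 − 1/ρ_e − λψ*/(λ − d_e). Then, with φ* := 1 − θ* − ψ*, one has φ*·λ − r − d_e − (b − d_e θ*) = 0 and φ*·ν − (b − d_e θ*)·ψ* = 0. -/
/-!
`ψ*` is the larger root of the quadratic `λ d_e ψ² + B ψ − ν (r + b) = 0`. Since
`1/ρ_e = (r + b)/(λ − d_e)`, the θ-component vanishes identically in `ψ`, while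
`(λ − d_e)` times the ψ-component is minus that quadratic evaluated at `ψ`.
-/

theorem quadratic_eq_zero_of_eq_neg_add_sqrt_discrim {a b c x : ℝ} (ha : a ≠ 0)
    (hd : 0 ≤ discrim a b c) (hx : x = (-b + √(discrim a b c)) / (2 * a)) :
    a * (x * x) + b * x + c = 0 :=
  (quadratic_eq_zero_iff ha (Real.mul_self_sqrt hd).symm x).2 (Or.inl hx)

section DeadlyDiseaseEquilibrium

variable {lam r b ν de θ ψ : ℝ}

theorem theta_component_eq_zero (hld : lam ≠ de)
    (hθ : θ = 1 - (r + b) / (lam - de) - lam * ψ / (lam - de)) :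
    (1 - θ - ψ) * lam - r - de - (b - de * θ) = 0 := by
  have := sub_ne_zero.2 hld
  subst hθ
  field_simp
  ring

theorem sub_mul_psi_component_eq (hld : lam ≠ de)
    (hθ : θ = 1 - (r + b) / (lam - de) - lam * ψ / (lam - de)) :
    (lam - de) * ((1 - θ - ψ) * ν - (b - de * θ) * ψ) =
      -(lam * de * (ψ * ψ) + (lam * b + de * (r + de - lam - ν)) * ψ + -(ν * (r + b))) := by
  have := sub_ne_zero.2 hld
  subst hθ
  field_simp
  ring

end DeadlyDiseaseEquilibrium

theorem stmt_16_general (lam r b ν de ρe B ψs θs : ℝ)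
    (hr : 0 < r) (hb : 0 < b) (hν : 0 < ν)
    (hde : 0 < de) (hdel : de < lam)
    (hρe : ρe = (lam - de) / (r + b))
    (hB : B = lam * b + de * (r + de - lam - ν))
    (hψ : ψs = (-B + Real.sqrt (B ^ 2 + 4 * lam * de * ν * (r + b))) / (2 * lam * de))
    (hθ : θs = 1 - 1 / ρe - lam * ψs / (lam - de)) :
    (1 - θs - ψs) * lam - r - de - (b - de * θs) = 0 ∧
    (1 - θs - ψs) * ν - (b - de * θs) * ψs = 0 := by
  have hlam : 0 < lam := hde.trans hdel
  have hld : lam ≠ de := hdel.ne'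
  have hθ' : θs = 1 - (r + b) / (lam - de) - lam * ψs / (lam - de) := by
    rw [hθ, hρe, one_div_div]
  have hdisc : discrim (lam * de) B (-(ν * (r + b))) = B ^ 2 + 4 * lam * de * ν * (r + b) := by
    rw [discrim]
    ring
  have hquad : lam * de * (ψs * ψs) + B * ψs + -(ν * (r + b)) = 0 :=
    quadratic_eq_zero_of_eq_neg_add_sqrt_discrim (by positivity) (hdisc ▸ by positivity)
      (by rw [hdisc, hψ, mul_assoc 2])
  refine ⟨theta_component_eq_zero hld hθ', ?_⟩
  have hψcomp := sub_mul_psi_component_eq (ν := ν) hld hθ'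
  rw [← hB, hquad, neg_zero] at hψcomp
  exact (mul_eq_zero.1 hψcomp).resolve_left (sub_ne_zero.2 hld)

/-- The candidate evolutionary stable equilibrium `(θ*, ψ*)` of the
deadly-disease (`0 < d_e < λ`) model with `q ≡ 1` annihilates the θ- and ψ-components of
the limit ODE: with `ρ_e = (λ−d_e)/(r+b)`, `B = λb + d_e(r + d_e − λ − ν)`,
`ψ* = (−B + √(B² + 4λd_eν(r+b)))/(2λd_e)` and `θ* = 1 − 1/ρ_e − λψ*/(λ−d_e)`, setting
`φ* = 1 − θ* − ψ*` one has `φ*λ − r − d_e − (b − d_eθ*) = 0` and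
`φ*ν − (b − d_eθ*)ψ* = 0`. -/
theorem stmt_16 (lam r b ν de ρe B ψs θs : ℝ)
    (hlam : 0 < lam) (hr : 0 < r) (hb : 0 < b) (hν : 0 < ν)
    (hde : 0 < de) (hdel : de < lam)
    (hρe : ρe = (lam - de) / (r + b))
    (hB : B = lam * b + de * (r + de - lam - ν))
    (hψ : ψs = (-B + Real.sqrt (B ^ 2 + 4 * lam * de * ν * (r + b))) / (2 * lam * de))
    (hθ : θs = 1 - 1 / ρe - lam * ψs / (lam - de)) :
    (1 - θs - ψs) * lam - r - de - (b - de * θs) = 0 ∧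
    (1 - θs - ψs) * ν - (b - de * θs) * ψs = 0 :=
  stmt_16_general lam r b ν de ρe B ψs θs hr hb hν hde hdel hρe hB hψ hθ
end
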